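/- arXiv:0809.2508 — 3 statements merged into one kernel-verified Lean document; each statement's English description precedes it below -/
import Mathlib

section
/- If A is an n×m real matrix all of whose n×n submatrices are invertible (Unique Representation Property, URP), and s ∈ null(A) has at least m−n elements with absolute value less than α, then ‖s‖ ≤ (M+1)·m·α, where M = max{‖B⁻¹‖ : B a submatrix of A with at most n linearly independent columns and B⁻¹ a left inverse of B} and the columns of A are normalized to unit norm. -/
open Matrix Finset Filter

noncomputable def vnorm {k : ℕ} (s : Fin k → ℝ) : ℝ := Real.sqrt (∑ i, (s i)^2)

noncomputable def mnorm {p q : ℕ} (L : Matrix (Fin p) (Fin q) ℝ) : ℝ :=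
  Real.sqrt (∑ i, ∑ j, (L i j)^2)

def URP {n m : ℕ} (A : Matrix (Fin n) (Fin m) ℝ) : Prop :=
  ∀ g : Fin n → Fin m, Function.Injective g → (A.submatrix id g).det ≠ 0

def UnitCols {n m : ℕ} (A : Matrix (Fin n) (Fin m) ℝ) : Prop :=
  ∀ j, vnorm (fun i => A i j) = 1

def LeftInvBound {n m : ℕ} (A : Matrix (Fin n) (Fin m) ℝ) (M : ℝ) : Prop :=
  ∀ (k : ℕ), k ≤ n → ∀ g : Fin k → Fin m, Function.Injective g →
    ∃ L : Matrix (Fin k) (Fin n) ℝ, L * A.submatrix id g = 1 ∧ mnorm L ≤ M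

/-! Let `T` be the set of entries of `s` smaller than `α` and `S` its complement, so `|S| ≤ n`.
Applying a left inverse `L` of the columns of `A` indexed by `S` to `A s = 0` expresses `s` on `S`
as `-∑_{j ∈ T} s_j L a_j`, and `‖L a_j‖ ≤ ‖L‖_F ‖a_j‖ = ‖L‖_F`. Hence `s` on `S` has norm at most
`‖L‖_F ∑_{j ∈ T} |s_j|`, `s` on `T` has norm at most `∑_{j ∈ T} |s_j|`, and this sum is at most `m α`. -/

lemma vnorm_eq_norm {k : ℕ} (x : Fin k → ℝ) : vnorm x = ‖WithLp.toLp 2 x‖ := by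
  simp [vnorm, EuclideanSpace.norm_eq, sq_abs]

lemma vnorm_neg {k : ℕ} (x : Fin k → ℝ) : vnorm (-x) = vnorm x := by
  simp [vnorm]

lemma vnorm_sum_smul_le {k : ℕ} {ι : Type*} (T : Finset ι) (c : ι → ℝ) (v : ι → Fin k → ℝ) :
    vnorm (∑ j ∈ T, c j • v j) ≤ ∑ j ∈ T, |c j| * vnorm (v j) := by
  simp only [vnorm_eq_norm, WithLp.toLp_sum, WithLp.toLp_smul]
  refine (norm_sum_le _ _).trans (le_of_eq ?_)
  simp [norm_smul]

lemma vnorm_mulVec_le {p q : ℕ} (L : Matrix (Fin p) (Fin q) ℝ) (c : Fin q → ℝ) :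
    vnorm (L *ᵥ c) ≤ mnorm L * vnorm c := by
  rw [vnorm, vnorm, mnorm, ← Real.sqrt_mul (by positivity), sum_mul]
  exact Real.sqrt_le_sqrt <| sum_le_sum fun i _ => sum_mul_sq_le_sq_mul_sq univ (L i) c

lemma mnorm_nonneg {p q : ℕ} (L : Matrix (Fin p) (Fin q) ℝ) : 0 ≤ mnorm L := Real.sqrt_nonneg _

lemma sqrt_sum_sq_le_add_sum_abs {ι : Type*} [Fintype ι] [DecidableEq ι] (f : ι → ℝ)
    (T : Finset ι) : √(∑ j, f j ^ 2) ≤ √(∑ j ∈ Tᶜ, f j ^ 2) + ∑ j ∈ T, |f j| := by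
  have hT : ∑ j ∈ T, f j ^ 2 ≤ (∑ j ∈ T, |f j|) ^ 2 := by
    simpa only [sq_abs] using sum_sq_le_sq_sum_of_nonneg (s := T) fun j _ => abs_nonneg (f j)
  have hTc := Real.sq_sqrt (sum_nonneg fun j (_ : j ∈ Tᶜ) => sq_nonneg (f j))
  have hTc_nonneg := Real.sqrt_nonneg (∑ j ∈ Tᶜ, f j ^ 2)
  have hT_nonneg : 0 ≤ ∑ j ∈ T, |f j| := sum_nonneg fun j _ => abs_nonneg (f j)
  rw [Real.sqrt_le_iff, ← sum_add_sum_compl T]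
  constructor
  · positivity
  · nlinarith

lemma comp_equiv_eq_neg_sum_of_mulVec_eq_zero {R ι κ μ : Type*} [CommRing R] [Fintype ι]
    [Fintype κ] [Fintype μ] [DecidableEq κ] [DecidableEq μ] (A : Matrix ι μ R) {S : Finset μ}
    (e : κ ≃ S) (L : Matrix κ ι R) (hL : L * A.submatrix id (fun i => (e i : μ)) = 1) {s : μ → R}
    (hs : A *ᵥ s = 0) :
    (fun i => s (e i)) = -∑ j ∈ Sᶜ, s j • L *ᵥ (fun r => A r j) := by
  set B := A.submatrix id (fun i => (e i : μ))
  have hsplit : B *ᵥ (fun i => s (e i)) = -∑ j ∈ Sᶜ, s j • (fun r => A r j) := by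
    rw [eq_neg_iff_add_eq_zero, ← hs]
    ext r
    simp only [B, Pi.add_apply, mulVec, dotProduct, submatrix_apply, id, Finset.sum_apply,
      Pi.smul_apply, smul_eq_mul]
    rw [← sum_add_sum_compl S, e.sum_comp (fun j : S => A r j * s j),
      S.sum_coe_sort (fun j => A r j * s j)]
    simp only [mul_comm]
  calc (fun i => s (e i)) = (L * B) *ᵥ (fun i => s (e i)) := by rw [hL, Matrix.one_mulVec]
    _ = -∑ j ∈ Sᶜ, s j • L *ᵥ (fun r => A r j) := by
      rw [← mulVec_mulVec, hsplit, mulVec_neg, mulVec_sum]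
      simp only [mulVec_smul]

lemma vnorm_le_of_mulVec_eq_zero {n m k : ℕ} {A : Matrix (Fin n) (Fin m) ℝ} (hcols : UnitCols A)
    {S : Finset (Fin m)} (e : Fin k ≃ S) {L : Matrix (Fin k) (Fin n) ℝ}
    (hL : L * A.submatrix id (fun i => (e i : Fin m)) = 1) {s : Fin m → ℝ} (hs : A *ᵥ s = 0) :
    vnorm s ≤ (mnorm L + 1) * ∑ j ∈ Sᶜ, |s j| := by
  have hS : √(∑ j ∈ S, s j ^ 2) = vnorm (fun i => s (e i)) := by
    rw [vnorm, e.sum_comp (fun j : S => s j ^ 2), S.sum_coe_sort (fun j => s j ^ 2)]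
  have hrest : vnorm (fun i => s (e i)) ≤ mnorm L * ∑ j ∈ Sᶜ, |s j| :=
    calc vnorm (fun i => s (e i))
        ≤ ∑ j ∈ Sᶜ, |s j| * vnorm (L *ᵥ (fun r => A r j)) := by
          rw [comp_equiv_eq_neg_sum_of_mulVec_eq_zero A e L hL hs, vnorm_neg]
          exact vnorm_sum_smul_le _ _ _
      _ ≤ ∑ j ∈ Sᶜ, |s j| * mnorm L := by
          gcongr with j
          simpa [hcols j] using vnorm_mulVec_le L (fun r => A r j)
      _ = mnorm L * ∑ j ∈ Sᶜ, |s j| := by rw [← sum_mul, mul_comm]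
  calc vnorm s ≤ √(∑ j ∈ Sᶜᶜ, s j ^ 2) + ∑ j ∈ Sᶜ, |s j| := sqrt_sum_sq_le_add_sum_abs s Sᶜ
    _ ≤ (mnorm L + 1) * ∑ j ∈ Sᶜ, |s j| := by rw [compl_compl, hS]; linarith

theorem stmt0_general {n m : ℕ} (hnm : n < m) (A : Matrix (Fin n) (Fin m) ℝ)
    (hcols : UnitCols A) (M : ℝ) (hM : LeftInvBound A M)
    (s : Fin m → ℝ) (hs : A.mulVec s = 0) (α : ℝ)
    (hα : (m - n : ℕ) ≤ (Finset.univ.filter fun i => |s i| < α).card) :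
    vnorm s ≤ (M + 1) * m * α := by
  set T := univ.filter fun i => |s i| < α
  have hα_nonneg : 0 ≤ α := by
    obtain ⟨j, hj⟩ : T.Nonempty := card_pos.mp (by omega)
    exact (abs_nonneg _).trans (mem_filter.mp hj).2.le
  obtain ⟨L, hL, hLM⟩ := hM Tᶜ.card (by rw [card_compl, Fintype.card_fin]; omega)
    (fun i => (Tᶜ.equivFin.symm i : Fin m)) (Subtype.val_injective.comp (Equiv.injective _))
  have hsmall : ∑ j ∈ T, |s j| ≤ m * α :=
    calc ∑ j ∈ T, |s j| ≤ T.card • α := sum_le_card_nsmul _ _ _ fun j hj => (mem_filter.mp hj).2.le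
      _ ≤ m * α := by
        rw [nsmul_eq_mul]
        gcongr
        simpa using card_le_univ T
  calc vnorm s ≤ (mnorm L + 1) * ∑ j ∈ Tᶜᶜ, |s j| := vnorm_le_of_mulVec_eq_zero hcols _ hL hs
    _ ≤ (M + 1) * (m * α) := by
      rw [compl_compl]
      gcongr
      · linarith [mnorm_nonneg L]
    _ = (M + 1) * m * α := by ring

theorem stmt0 {n m : ℕ} (hnm : n < m) (A : Matrix (Fin n) (Fin m) ℝ)
    (hcols : UnitCols A) (hURP : URP A) (M : ℝ) (hM : LeftInvBound A M)
    (s : Fin m → ℝ) (hs : A.mulVec s = 0) (α : ℝ)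
    (hα : (m - n : ℕ) ≤ (Finset.univ.filter fun i => |s i| < α).card) :
    vnorm s ≤ (M + 1) * m * α :=
  stmt0_general hnm A hcols M hM s hs α hα
end

section
/- Let f_σ (σ > 0) be a family of functions ℝ → ℝ satisfying: (1) lim_{σ→0} f_σ(s) = 0 for all s ≠ 0; (2) f_σ(0) = 1; (3) 0 ≤ f_σ(s) ≤ 1; (4) for all ν, α > 0 there exists σ₀ > 0 such that |s| > α implies f_σ(s) < ν for all σ < σ₀. Let A be n×m with unit-norm columns satisfying URP, F_σ(s) = Σᵢ f_σ(sᵢ), and s⁰ the (unique) solution of As = x with ‖s⁰‖₀ ≤ n/2. If s^σ maximizes F_σ subject to As = x, then s^σ → s⁰ as σ → 0. -/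
open Matrix Finset Filter

/-!
Let `k` be the number of nonzero entries of `s⁰`. Every term of `F_σ` is at most `1`, and once
`σ` is small every entry of size `> α` contributes `< ν` with `ν m < 1`; comparing with
`F_σ(s^σ) ≥ F_σ(s⁰) ≥ m - k` shows that at most `k` entries of `s^σ` exceed `α`. So
`d = s^σ - s⁰ ∈ ker A` is bounded by `α` outside a set `S` of at most `2k ≤ n` indices. By URP the
columns of `A` indexed by `S` are independent, so restriction to the complement of `S` is
injective on `ker A`, hence anti-Lipschitz: `‖d‖ ≤ M α` with `M` depending only on `A`.
-/

open scoped NNReal Topology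

theorem URP.linearIndepOn_col {n m : ℕ} {A : Matrix (Fin n) (Fin m) ℝ} (hA : URP A)
    (hnm : n ≤ m) {S : Finset (Fin m)} (hS : #S ≤ n) :
    LinearIndepOn ℝ A.col (S : Set (Fin m)) := by
  obtain ⟨T, hST, hT⟩ := Finset.exists_superset_card_eq hS (by simpa using hnm)
  let e : Fin n ≃ T := (T.equivFinOfCardEq hT).symm
  have hcols : LinearIndependent ℝ (A.submatrix id (Subtype.val ∘ e)).col :=
    linearIndependent_cols_iff_isUnit.2 <| (isUnit_iff_isUnit_det _).2 <|
      (hA _ (Subtype.val_injective.comp e.injective)).isUnit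
  have hT : LinearIndepOn ℝ A.col (T : Set (Fin m)) := (linearIndependent_equiv e).1 hcols
  exact hT.mono (by exact_mod_cast hST)

theorem Matrix.eq_zero_of_mulVec_eq_zero_of_linearIndepOn {κ ι K : Type*} [Fintype ι] [Field K]
    {A : Matrix κ ι K} {S : Finset ι} (hS : LinearIndepOn K A.col (S : Set ι)) {d : ι → K}
    (hd : A *ᵥ d = 0) (hdS : ∀ i ∉ S, d i = 0) : d = 0 := by
  have hsum : ∑ i ∈ S, d i • A.col i = 0 := by
    rw [← hd, mulVec_eq_sum, Finset.sum_subset S.subset_univ fun i _ hi => by simp [hdS i hi]]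
    simp [col]
  funext i
  by_cases hi : i ∈ S
  · exact linearIndepOn_finset_iff.1 hS d hsum i hi
  · exact hdS i hi

theorem Matrix.exists_norm_le_mul_norm_restrict {κ ι 𝕜 : Type*} [Fintype κ] [Fintype ι]
    [DecidableEq ι] [NontriviallyNormedField 𝕜] [CompleteSpace 𝕜]
    {A : Matrix κ ι 𝕜} {S : Finset ι} (hS : LinearIndepOn 𝕜 A.col (S : Set ι)) :
    ∃ C : ℝ≥0, ∀ d : ι → 𝕜, A *ᵥ d = 0 → ‖d‖ ≤ C * ‖fun i : {i // i ∉ S} => d i‖ := by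
  let restrict : LinearMap.ker A.mulVecLin →ₗ[𝕜] ({i // i ∉ S} → 𝕜) :=
    (LinearMap.funLeft 𝕜 𝕜 Subtype.val).comp (LinearMap.ker A.mulVecLin).subtype
  have hinj : Function.Injective restrict := by
    rw [← LinearMap.ker_eq_bot, LinearMap.ker_eq_bot']
    intro w hw
    exact Subtype.ext <| eq_zero_of_mulVec_eq_zero_of_linearIndepOn hS w.2
      fun i hi => congrFun hw ⟨i, hi⟩
  obtain ⟨C, -, hC⟩ := (LinearMap.injective_iff_antilipschitz restrict).1 hinj
  refine ⟨C, fun d hd => ?_⟩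
  have h := hC.le_mul_dist ⟨d, hd⟩ 0
  simp only [map_zero, dist_zero_right] at h
  exact h

theorem URP.exists_uniform_norm_le_mul_norm_restrict {n m : ℕ} {A : Matrix (Fin n) (Fin m) ℝ}
    (hA : URP A) (hnm : n ≤ m) : ∃ M : ℝ≥0, ∀ S : Finset (Fin m), #S ≤ n →
      ∀ d, A *ᵥ d = 0 → ‖d‖ ≤ M * ‖fun i : {i // i ∉ S} => d i‖ := by
  have hC (S : Finset (Fin m)) : ∃ C : ℝ≥0, #S ≤ n →
      ∀ d, A *ᵥ d = 0 → ‖d‖ ≤ C * ‖fun i : {i // i ∉ S} => d i‖ := by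
    by_cases hS : #S ≤ n
    · obtain ⟨C, hC⟩ := Matrix.exists_norm_le_mul_norm_restrict (hA.linearIndepOn_col hnm hS)
      exact ⟨C, fun _ => hC⟩
    · exact ⟨0, fun h => absurd h hS⟩
  choose C hC using hC
  obtain ⟨M, hM⟩ := Finite.exists_le C
  exact ⟨M, fun S hS d hd => (hC S hS d hd).trans <|
    mul_le_mul_of_nonneg_right (NNReal.coe_le_coe.2 (hM S)) (norm_nonneg _)⟩

theorem card_abs_gt_le_card_ne_zero {ι : Type*} [Fintype ι] {f : ℝ → ℝ} {α ν : ℝ}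
    (hf0 : f 0 = 1) (hf_nonneg : ∀ s, 0 ≤ f s) (hf_le_one : ∀ s, f s ≤ 1)
    (hfν : ∀ s, α < |s| → f s < ν) (hν : ν * Fintype.card ι < 1)
    {s t : ι → ℝ} (hst : ∑ i, f (t i) ≤ ∑ i, f (s i)) :
    #{i | α < |s i|} ≤ #{i | t i ≠ 0} := by
  have ht : ∑ i, (1 - f (t i)) ≤ #{i | t i ≠ 0} := by
    rw [natCast_card_filter]
    gcongr with i
    split_ifs with h
    · linarith [hf_nonneg (t i)]
    · simp [not_not.1 h, hf0]
  have hs : (#{i | α < |s i|} : ℝ) * (1 - ν) ≤ ∑ i, (1 - f (s i)) := by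
    rw [natCast_card_filter, sum_mul]
    gcongr with i
    split_ifs with h
    · linarith [hfν _ h]
    · linarith [hf_le_one (s i)]
  have hcard : (#{i | α < |s i|} : ℝ) * ν < 1 := by
    have : (#{i | α < |s i|} : ℝ) ≤ Fintype.card ι := by exact_mod_cast card_le_univ _
    rcases le_or_gt ν 0 with h | h <;> nlinarith
  have : (#{i | α < |s i|} : ℝ) < #{i | t i ≠ 0} + 1 := by
    simp only [sum_sub_distrib] at ht hs
    linarith
  exact_mod_cast Nat.lt_succ_iff.1 (by exact_mod_cast this)

theorem URP.exists_norm_sub_le {n m : ℕ} {A : Matrix (Fin n) (Fin m) ℝ} (hA : URP A)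
    (hnm : n ≤ m) :
    ∃ M : ℝ≥0, ∀ s s₀ : Fin m → ℝ, A *ᵥ s = A *ᵥ s₀ → 2 * #{i | s₀ i ≠ 0} ≤ n →
      ∀ α, 0 ≤ α → #{i | α < |s i|} ≤ #{i | s₀ i ≠ 0} → ‖s - s₀‖ ≤ M * α := by
  obtain ⟨M, hM⟩ := hA.exists_uniform_norm_le_mul_norm_restrict hnm
  refine ⟨M, fun s s₀ hs hs₀ α hα hcard => ?_⟩
  set S : Finset (Fin m) := univ.filter (fun i => s₀ i ≠ 0) ∪ univ.filter (fun i => α < |s i|)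
  have hS : #S ≤ n := (card_union_le _ _).trans (by omega)
  have hker : A *ᵥ (s - s₀) = 0 := by rw [mulVec_sub, hs, sub_self]
  have hsmall : ‖fun i : {i // i ∉ S} => (s - s₀) i‖ ≤ α := by
    refine (pi_norm_le_iff_of_nonneg hα).2 fun ⟨i, hi⟩ => ?_
    simp only [S, mem_union, mem_filter, mem_univ, true_and, not_or, not_not] at hi
    simpa [hi.1] using hi.2
  exact (hM S hS _ hker).trans (by gcongr)

theorem continuous_vnorm {k : ℕ} : Continuous (vnorm (k := k)) := by
  unfold vnorm; fun_prop

theorem tendsto_vnorm_zero {k : ℕ} : Tendsto (vnorm (k := k)) (𝓝 0) (𝓝 0) := by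
  simpa [vnorm] using continuous_vnorm.tendsto (0 : Fin k → ℝ)

theorem stmt6_general {n m : ℕ} (hnm : n < m) (A : Matrix (Fin n) (Fin m) ℝ)
    (hURP : URP A)
    (f : ℝ → ℝ → ℝ)
    (hf2 : ∀ σ : ℝ, 0 < σ → f σ 0 = 1)
    (hf3 : ∀ σ : ℝ, 0 < σ → ∀ s : ℝ, 0 ≤ f σ s ∧ f σ s ≤ 1)
    (hf4 : ∀ ν : ℝ, 0 < ν → ∀ α : ℝ, 0 < α → ∃ σ0 : ℝ, 0 < σ0 ∧
      ∀ σ : ℝ, 0 < σ → σ < σ0 → ∀ s : ℝ, α < |s| → f σ s < ν)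
    (x : Fin n → ℝ) (s0 : Fin m → ℝ) (hs0 : A.mulVec s0 = x)
    (hs0k : 2 * (Finset.univ.filter fun i => s0 i ≠ 0).card ≤ n)
    (sσ : ℝ → (Fin m → ℝ))
    (hsσ : ∀ σ : ℝ, 0 < σ → A.mulVec (sσ σ) = x ∧
      ∀ s : Fin m → ℝ, A.mulVec s = x → ∑ i, f σ (s i) ≤ ∑ i, f σ (sσ σ i)) :
    Tendsto (fun σ => vnorm (sσ σ - s0)) (nhdsWithin 0 (Set.Ioi 0)) (nhds 0) := by
  obtain ⟨M, hM⟩ := hURP.exists_norm_sub_le hnm.le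
  suffices Tendsto (fun σ => sσ σ - s0) (𝓝[>] 0) (𝓝 0) from tendsto_vnorm_zero.comp this
  refine Metric.tendsto_nhds.2 fun ε hε => ?_
  set α := ε / (M + 1)
  have hα : 0 < α := by positivity
  obtain ⟨σ₀, hσ₀, hfα⟩ := hf4 (1 / (m + 1)) (by positivity) α hα
  filter_upwards [Ioo_mem_nhdsGT hσ₀] with σ ⟨hσ, hσσ₀⟩
  obtain ⟨hAsσ, hmax⟩ := hsσ σ hσ
  have hcard : #{i | α < |sσ σ i|} ≤ #{i | s0 i ≠ 0} :=
    card_abs_gt_le_card_ne_zero (hf2 σ hσ) (fun s => (hf3 σ hσ s).1) (fun s => (hf3 σ hσ s).2)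
      (hfα σ hσ hσσ₀) (by
        rw [Fintype.card_fin, one_div_mul_eq_div, div_lt_one (by positivity)]
        linarith) (hmax s0 hs0)
  rw [dist_zero_right]
  calc ‖sσ σ - s0‖ ≤ M * α := hM _ _ (hAsσ.trans hs0.symm) hs0k α hα.le hcard
    _ < ε := by
      rw [mul_div_assoc', div_lt_iff₀ (by positivity)]
      linarith

theorem stmt6 {n m : ℕ} (hnm : n < m) (A : Matrix (Fin n) (Fin m) ℝ)
    (hcols : UnitCols A) (hURP : URP A)
    (f : ℝ → ℝ → ℝ)
    (hf1 : ∀ s : ℝ, s ≠ 0 →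
      Tendsto (fun σ => f σ s) (nhdsWithin 0 (Set.Ioi 0)) (nhds 0))
    (hf2 : ∀ σ : ℝ, 0 < σ → f σ 0 = 1)
    (hf3 : ∀ σ : ℝ, 0 < σ → ∀ s : ℝ, 0 ≤ f σ s ∧ f σ s ≤ 1)
    (hf4 : ∀ ν : ℝ, 0 < ν → ∀ α : ℝ, 0 < α → ∃ σ0 : ℝ, 0 < σ0 ∧
      ∀ σ : ℝ, 0 < σ → σ < σ0 → ∀ s : ℝ, α < |s| → f σ s < ν)
    (x : Fin n → ℝ) (s0 : Fin m → ℝ) (hs0 : A.mulVec s0 = x)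
    (hs0k : 2 * (Finset.univ.filter fun i => s0 i ≠ 0).card ≤ n)
    (sσ : ℝ → (Fin m → ℝ))
    (hsσ : ∀ σ : ℝ, 0 < σ → A.mulVec (sσ σ) = x ∧
      ∀ s : Fin m → ℝ, A.mulVec s = x → ∑ i, f σ (s i) ≤ ∑ i, f σ (sσ σ i)) :
    Tendsto (fun σ => vnorm (sσ σ - s0)) (nhdsWithin 0 (Set.Ioi 0)) (nhds 0) :=
  stmt6_general hnm A hURP f hf2 hf3 hf4 x s0 hs0 hs0k sσ hsσ
end

section
/- If A is an n×m matrix satisfying the URP (every n×n submatrix invertible), then any two solutions of As = x each having at most n/2 nonzero entries are equal (uniqueness of the sparsest solution when sparsity is below n/2). -/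
/-! The difference of two such solutions lies in the kernel of `A` and has at most `n` nonzero
entries. Under URP any at most `n` columns of `A` are linearly independent (extend them to `n`
columns, whose square submatrix is invertible), so the difference vanishes. -/

open Matrix Finset Filter

theorem Finset.card_filter_sub_ne_zero_le {ι G : Type*} [Fintype ι] [AddGroup G] [DecidableEq G]
    (f g : ι → G) :
    #{i | (f - g) i ≠ 0} ≤ #{i | f i ≠ 0} + #{i | g i ≠ 0} := by
  classical
  refine (card_le_card fun i hi => ?_).trans (card_union_le _ _)
  simp only [mem_filter, mem_univ, true_and, mem_union, Pi.sub_apply] at hi ⊢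
  by_contra! h
  exact hi (by rw [h.1, h.2, sub_zero])

theorem Matrix.eq_zero_of_mulVec_eq_zero_of_linearIndepOn_s19 {R ι κ : Type*} [CommRing R]
    [Fintype κ] [DecidableEq R] {A : Matrix ι κ R} {v : κ → R}
    (hA : LinearIndepOn R A.col (({j | v j ≠ 0} : Finset κ) : Set κ)) (hv : A *ᵥ v = 0) :
    v = 0 := by
  have hsum : ∑ j ∈ ({j | v j ≠ 0} : Finset κ), v j • A.col j = 0 := by
    rw [sum_filter_of_ne fun j _ h => left_ne_zero_of_smul h, ← hv, mulVec_eq_sum]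
    simp [col]
  funext j
  by_contra hj
  exact hj (linearIndepOn_finset_iff.mp hA v hsum j (by simpa using hj))

namespace URP

variable {n m : ℕ} {A : Matrix (Fin n) (Fin m) ℝ}

theorem linearIndepOn_col_of_card_eq (hA : URP A) {T : Finset (Fin m)} (hT : #T = n) :
    LinearIndepOn ℝ A.col (T : Set (Fin m)) := by
  let e := T.orderIsoOfFin hT
  have hcols := linearIndependent_cols_of_det_ne_zero
    (hA (fun i => (e i : Fin m)) (Subtype.val_injective.comp e.injective))
  exact (linearIndependent_equiv e.toEquiv).mp hcols

theorem linearIndepOn_col_s19 (hA : URP A) (hnm : n ≤ m) {T : Finset (Fin m)} (hT : #T ≤ n) :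
    LinearIndepOn ℝ A.col (T : Set (Fin m)) := by
  obtain ⟨T', hTT', hT'⟩ := exists_superset_card_eq hT (by simpa using hnm)
  exact (hA.linearIndepOn_col_of_card_eq hT').mono (coe_subset.mpr hTT')

end URP

theorem stmt19 {n m : ℕ} (hnm : n < m) (A : Matrix (Fin n) (Fin m) ℝ)
    (hURP : URP A) (x : Fin n → ℝ)
    (s1 s2 : Fin m → ℝ) (h1 : A.mulVec s1 = x) (h2 : A.mulVec s2 = x)
    (h1k : 2 * (Finset.univ.filter fun i => s1 i ≠ 0).card ≤ n)
    (h2k : 2 * (Finset.univ.filter fun i => s2 i ≠ 0).card ≤ n) :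
    s1 = s2 := by
  have hker : A *ᵥ (s1 - s2) = 0 := by rw [mulVec_sub, h1, h2, sub_self]
  have hsupp : #{j | (s1 - s2) j ≠ 0} ≤ n := by
    have := card_filter_sub_ne_zero_le s1 s2
    omega
  exact sub_eq_zero.mp (eq_zero_of_mulVec_eq_zero_of_linearIndepOn_s19
    (hURP.linearIndepOn_col_s19 hnm.le hsupp) hker)
end
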